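/- arXiv:1602.01452 — 5 statements merged into one kernel-verified Lean document; each statement's English description precedes it below -/
import Mathlib

section
/- Let α ∈ (0,1], let p₀,…,p_{n-1} ∈ ℝ, and let r ∈ ℝ. Then for all t > 0, applying the operator L_α[y] = ⁿT_α y + p_{n-1}·ⁿ⁻¹T_α y + ⋯ + p₁·T_α y + p₀·y to y(t) = exp(r t^α/α) gives L_α[y](t) = P(r)·exp(r t^α/α), where P(r) = rⁿ + p_{n-1}r^{n-1} + ⋯ + p₁ r + p₀. -/
noncomputable def condD (α : ℝ) (f : ℝ → ℝ) : ℝ → ℝ := fun t => t ^ (1 - α) * deriv f t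

lemma condD_iter_exp (α : ℝ) (hα : 0 < α) (r : ℝ) (k : ℕ) :
    ∀ t : ℝ, 0 < t →
      (condD α)^[k] (fun x => Real.exp (r * x ^ α / α)) t
        = r ^ k * Real.exp (r * t ^ α / α) := by
  induction k with
  | zero => intro t ht; simp
  | succ k ih =>
    intro t ht
    rw [Function.iterate_succ_apply']
    have hev : (condD α)^[k] (fun x => Real.exp (r * x ^ α / α))
        =ᶠ[nhds t] fun x => r ^ k * Real.exp (r * x ^ α / α) := by
      filter_upwards [IsOpen.mem_nhds isOpen_Ioi ht] with x hx
      exact ih x hx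
    have hd : HasDerivAt (fun x : ℝ => r ^ k * Real.exp (r * x ^ α / α))
        (r ^ k * (Real.exp (r * t ^ α / α) * (r * (α * t ^ (α - 1)) / α))) t := by
      have h1 : HasDerivAt (fun x : ℝ => r * x ^ α / α)
          (r * (α * t ^ (α - 1)) / α) t :=
        ((Real.hasDerivAt_rpow_const (Or.inl ht.ne')).const_mul r).div_const α
      exact ((Real.hasDerivAt_exp _).comp t h1).const_mul _
    have hderiv : deriv ((condD α)^[k] (fun x => Real.exp (r * x ^ α / α))) t
        = r ^ k * (Real.exp (r * t ^ α / α) * (r * (α * t ^ (α - 1)) / α)) := by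
      rw [hev.deriv_eq, hd.deriv]
    show t ^ (1 - α) * _ = _
    rw [hderiv]
    have hα0 : α ≠ 0 := hα.ne'
    have h2 : r * (α * t ^ (α - 1)) / α = r * t ^ (α - 1) := by
      field_simp
    rw [h2]
    have hpow : t ^ (1 - α) * t ^ (α - 1) = 1 := by
      rw [← Real.rpow_add ht]; norm_num
    linear_combination (r ^ k * r * Real.exp (r * t ^ α / α)) * hpow

theorem stmt_8 (α : ℝ) (hα : α ∈ Set.Ioc (0:ℝ) 1) (n : ℕ) (p : Fin n → ℝ) (r : ℝ)
    (t : ℝ) (ht : 0 < t) :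
    (condD α)^[n] (fun x => Real.exp (r * x ^ α / α)) t
      + ∑ i : Fin n, p i * (condD α)^[(i : ℕ)] (fun x => Real.exp (r * x ^ α / α)) t
      = (r ^ n + ∑ i : Fin n, p i * r ^ (i : ℕ)) * Real.exp (r * t ^ α / α) := by
  have h := fun k => condD_iter_exp α hα.1 r k t ht
  simp only [h]
  rw [add_mul, Finset.sum_mul]
  congr 1
  exact Finset.sum_congr rfl fun i _ => by ring
end

section
/- Let α ∈ (0,1] and r ∈ ℝ with rⁿ + p_{n-1}r^{n-1} + ⋯ + p₀ = 0. Then y(t) = exp(r t^α/α) satisfies ⁿT_α y + p_{n-1}·ⁿ⁻¹T_α y + ⋯ + p₀ y = 0 for all t > 0. -/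
lemma exp_hasDerivAt (α : ℝ) (hα : α ≠ 0) (r : ℝ) {x : ℝ} (hx : 0 < x) :
    HasDerivAt (fun z : ℝ => Real.exp (r * z ^ α / α))
      (r * x ^ (α - 1) * Real.exp (r * x ^ α / α)) x := by
  have h1 : HasDerivAt (fun z : ℝ => z ^ α) (α * x ^ (α - 1)) x :=
    Real.hasDerivAt_rpow_const (Or.inl hx.ne')
  have h2 : HasDerivAt (fun z : ℝ => r * z ^ α / α) (r * (α * x ^ (α - 1)) / α) x :=
    (h1.const_mul r).div_const α
  have h3 := h2.exp
  convert h3 using 1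
  field_simp

lemma iter_eq (α : ℝ) (hα : α ∈ Set.Ioc (0:ℝ) 1) (r : ℝ) (k : ℕ) :
    ∀ x : ℝ, 0 < x →
      (condD α)^[k] (fun z => Real.exp (r * z ^ α / α)) x
        = r ^ k * Real.exp (r * x ^ α / α) := by
  induction k with
  | zero => intro x hx; simp
  | succ k ih =>
    intro x hx
    rw [Function.iterate_succ_apply']
    show x ^ (1 - α) * deriv ((condD α)^[k] (fun z => Real.exp (r * z ^ α / α))) x = _
    have heq : (condD α)^[k] (fun z => Real.exp (r * z ^ α / α))
        =ᶠ[nhds x] (fun z => r ^ k * Real.exp (r * z ^ α / α)) := by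
      filter_upwards [IsOpen.mem_nhds isOpen_Ioi hx] with z hz using ih z hz
    rw [heq.deriv_eq]
    have hd := ((exp_hasDerivAt α hα.1.ne' r hx).const_mul (r ^ k)).deriv
    rw [hd]
    have hpow : x ^ (1 - α) * x ^ (α - 1) = 1 := by
      rw [← Real.rpow_add hx]; norm_num
    calc x ^ (1 - α) * (r ^ k * (r * x ^ (α - 1) * Real.exp (r * x ^ α / α)))
        = (x ^ (1 - α) * x ^ (α - 1)) * (r ^ k * r * Real.exp (r * x ^ α / α)) := by ring
      _ = r ^ (k + 1) * Real.exp (r * x ^ α / α) := by rw [hpow, pow_succ]; ring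

theorem stmt_9 (α : ℝ) (hα : α ∈ Set.Ioc (0:ℝ) 1) (n : ℕ) (p : Fin n → ℝ) (r : ℝ)
    (hroot : r ^ n + ∑ i : Fin n, p i * r ^ (i : ℕ) = 0) (t : ℝ) (ht : 0 < t) :
    (condD α)^[n] (fun x => Real.exp (r * x ^ α / α)) t
      + ∑ i : Fin n, p i * (condD α)^[(i : ℕ)] (fun x => Real.exp (r * x ^ α / α)) t
      = 0 := by
  have h : ∀ k : ℕ, (condD α)^[k] (fun x => Real.exp (r * x ^ α / α)) t
      = r ^ k * Real.exp (r * t ^ α / α) := fun k => iter_eq α hα r k t ht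
  simp only [h, ← mul_assoc]
  rw [← Finset.sum_mul, ← add_mul]
  simp [mul_comm, hroot]
end

section
/- For α ∈ (0,1], real constants c₁, c₂, and t > 0, the function y(t) = exp(−t^α/(2α))·(c₁ cos(√3 t^α/(2α)) + c₂ sin(√3 t^α/(2α))) satisfies ²T_α y + T_α y + y = 0. -/
open Real Filter Topology

section TimeChange

variable {α : ℝ}

lemma hasDerivAt_rpow_div_self (hα : α ≠ 0) {x : ℝ} (hx : 0 < x) :
    HasDerivAt (fun x : ℝ => x ^ α / α) (x ^ (α - 1)) x := by
  simpa only [mul_div_cancel_left₀ _ hα] using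
    (hasDerivAt_rpow_const (p := α) (Or.inl hx.ne')).div_const α

lemma condD_comp_rpow_div (hα : α ≠ 0) {g : ℝ → ℝ} {x : ℝ} (hx : 0 < x)
    (hg : DifferentiableAt ℝ g (x ^ α / α)) :
    condD α (fun x => g (x ^ α / α)) x = deriv g (x ^ α / α) := by
  have hcomp := hg.hasDerivAt.comp x (hasDerivAt_rpow_div_self hα hx)
  rw [condD, show deriv (fun x => g (x ^ α / α)) x = _ from hcomp.deriv, mul_left_comm,
    ← rpow_add hx, sub_add_sub_cancel, sub_self, rpow_zero, mul_one]

lemma condD_iterate_comp_rpow_div_eventuallyEq (hα : α ≠ 0) {g : ℝ → ℝ}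
    (hg : ContDiff ℝ ⊤ g) (n : ℕ) {t : ℝ} (ht : 0 < t) :
    (condD α)^[n] (fun x => g (x ^ α / α)) =ᶠ[𝓝 t] fun x => iteratedDeriv n g (x ^ α / α) := by
  induction n generalizing t with
  | zero => rfl
  | succ n ih =>
    filter_upwards [Ioi_mem_nhds ht] with x hx
    rw [Function.iterate_succ_apply', iteratedDeriv_succ, ← condD_comp_rpow_div hα hx
      ((hg.differentiable_iteratedDeriv n (WithTop.coe_lt_top _)) _)]
    exact congrArg (x ^ (1 - α) * ·) (ih hx).deriv_eq

end TimeChange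

section DampedOscillation

noncomputable def dampedOsc (a b u : ℝ) : ℝ :=
  exp (-u / 2) * (a * cos (√3 * u / 2) + b * sin (√3 * u / 2))

lemma contDiff_dampedOsc (a b : ℝ) : ContDiff ℝ ⊤ (dampedOsc a b) := by
  unfold dampedOsc
  fun_prop

lemma hasDerivAt_dampedOsc (a b u : ℝ) :
    HasDerivAt (dampedOsc a b) (dampedOsc ((√3 * b - a) / 2) (-(√3 * a + b) / 2) u) u := by
  have hlin (k : ℝ) : HasDerivAt (fun u : ℝ => k * u / 2) (k / 2) u := by
    simpa using ((hasDerivAt_id u).const_mul k).div_const 2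
  have hneg : HasDerivAt (fun u : ℝ => -u / 2) (-1 / 2) u := by
    simpa [neg_div] using (hlin (-1))
  refine (hneg.exp.mul
    (((hlin √3).cos.const_mul a).add ((hlin √3).sin.const_mul b))).congr_deriv ?_
  simp only [dampedOsc, Pi.add_apply]
  ring

lemma deriv_dampedOsc (a b : ℝ) :
    deriv (dampedOsc a b) = dampedOsc ((√3 * b - a) / 2) (-(√3 * a + b) / 2) :=
  funext fun u => (hasDerivAt_dampedOsc a b u).deriv

lemma iteratedDeriv_two_add_deriv_add_dampedOsc (a b u : ℝ) :
    iteratedDeriv 2 (dampedOsc a b) u + deriv (dampedOsc a b) u + dampedOsc a b u = 0 := by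
  have h3 : √3 * √3 = 3 := mul_self_sqrt (by norm_num)
  rw [iteratedDeriv_succ, iteratedDeriv_one, deriv_dampedOsc, deriv_dampedOsc]
  simp only [dampedOsc]
  linear_combination -(exp (-u / 2) * (a * cos (√3 * u / 2) + b * sin (√3 * u / 2)) / 4) * h3

end DampedOscillation

theorem stmt_12 (α : ℝ) (hα : α ∈ Set.Ioc (0:ℝ) 1) (c₁ c₂ : ℝ) (t : ℝ) (ht : 0 < t) :
    (condD α)^[2] (fun x => Real.exp (-x ^ α / (2 * α)) *
        (c₁ * Real.cos (Real.sqrt 3 * x ^ α / (2 * α)) +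
         c₂ * Real.sin (Real.sqrt 3 * x ^ α / (2 * α)))) t
      + condD α (fun x => Real.exp (-x ^ α / (2 * α)) *
        (c₁ * Real.cos (Real.sqrt 3 * x ^ α / (2 * α)) +
         c₂ * Real.sin (Real.sqrt 3 * x ^ α / (2 * α)))) t
      + Real.exp (-t ^ α / (2 * α)) *
        (c₁ * Real.cos (Real.sqrt 3 * t ^ α / (2 * α)) +
         c₂ * Real.sin (Real.sqrt 3 * t ^ α / (2 * α))) = 0 := by
  have hα0 : α ≠ 0 := hα.1.ne'
  have hy (x : ℝ) : exp (-x ^ α / (2 * α)) *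
      (c₁ * cos (√3 * x ^ α / (2 * α)) + c₂ * sin (√3 * x ^ α / (2 * α))) =
      dampedOsc c₁ c₂ (x ^ α / α) := by
    rw [dampedOsc]
    ring_nf
  have hT (n : ℕ) := (condD_iterate_comp_rpow_div_eventuallyEq hα0 (contDiff_dampedOsc c₁ c₂)
    n ht).eq_of_nhds
  simp only [hy]
  rw [hT 2, ← Function.iterate_one (condD α), hT 1, iteratedDeriv_one]
  exact iteratedDeriv_two_add_deriv_add_dampedOsc c₁ c₂ _
end

section
/- Let α ∈ (0,1] and θ, β ∈ ℝ with β ≠ 0, and suppose θ + iβ is a root of P(X) = Xⁿ + p_{n-1}X^{n-1} + ⋯ + p₀ with real coefficients. Then both y₁(t) = exp(θ t^α/α)·cos(β t^α/α) and y₂(t) = exp(θ t^α/α)·sin(β t^α/α) satisfy ⁿT_α y + p_{n-1}·ⁿ⁻¹T_α y + ⋯ + p₀ y = 0 for all t > 0. -/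
/-!
With `E(t) = exp (λ t^α / α)` for complex `λ`, the chain rule gives `E' = λ t^(α-1) E`, so
`T_α E = λ E` on `t > 0`. Since `T_α` commutes with the real-linear maps `Re` and `Im`, iterating
gives `ⁿT_α (Re E) = Re (λⁿ E)` and `ⁿT_α (Im E) = Im (λⁿ E)`, and the equation for `y₁ = Re E`,
`y₂ = Im E` becomes `Re (P(λ) E) = 0`, `Im (P(λ) E) = 0`, which holds when `P(λ) = 0`.
-/

open Complex

noncomputable def confExp (α : ℝ) (L : ℂ) (x : ℝ) : ℂ := cexp (L * ((x ^ α : ℝ) : ℂ) / α)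

lemma hasDerivAt_confExp {α : ℝ} (hα : α ≠ 0) (L : ℂ) {t : ℝ} (ht : 0 < t) :
    HasDerivAt (confExp α L) ((t ^ (α - 1) : ℝ) • (L * confExp α L t)) t := by
  have hpow : HasDerivAt (fun x : ℝ => ((x ^ α : ℝ) : ℂ)) ((α * t ^ (α - 1) : ℝ) : ℂ) t :=
    (Real.hasDerivAt_rpow_const (Or.inl ht.ne')).ofReal_comp
  refine ((hpow.const_mul L).div_const (α : ℂ)).cexp.congr_deriv ?_
  have hα' : (α : ℂ) ≠ 0 := by exact_mod_cast hα
  rw [confExp, real_smul]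
  push_cast
  field_simp

lemma condD_iterate_confExp (φ : ℂ →L[ℝ] ℝ) {α : ℝ} (hα : α ≠ 0) (L : ℂ) (k : ℕ) {t : ℝ}
    (ht : 0 < t) :
    (condD α)^[k] (fun x => φ (confExp α L x)) t = φ (L ^ k * confExp α L t) := by
  induction k generalizing t with
  | zero => simp
  | succ k ih =>
    have hloc : (condD α)^[k] (fun x => φ (confExp α L x))
        =ᶠ[nhds t] fun x => φ (L ^ k * confExp α L x) := by
      filter_upwards [eventually_gt_nhds ht] with x hx using ih hx
    have hderiv : HasDerivAt (fun x => φ (L ^ k * confExp α L x))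
        (φ ((t ^ (α - 1) : ℝ) • (L ^ (k + 1) * confExp α L t))) t := by
      refine (φ.hasFDerivAt.comp_hasDerivAt t
        ((hasDerivAt_confExp hα L ht).const_mul (L ^ k))).congr_deriv ?_
      rw [mul_smul_comm, pow_succ, mul_assoc]
    have hcancel : t ^ (1 - α) * t ^ (α - 1) = 1 := by
      rw [← Real.rpow_add ht]
      norm_num
    rw [Function.iterate_succ_apply', condD, hloc.deriv_eq, hderiv.deriv, map_smul, smul_eq_mul,
      ← mul_assoc, hcancel, one_mul]

lemma map_pow_mul_add_sum (φ : ℂ →L[ℝ] ℝ) {n : ℕ} (p : Fin n → ℝ) (L E : ℂ) :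
    φ (L ^ n * E) + ∑ i : Fin n, p i * φ (L ^ (i : ℕ) * E)
      = φ ((L ^ n + ∑ i : Fin n, (p i : ℂ) * L ^ (i : ℕ)) * E) := by
  simp only [add_mul, Finset.sum_mul, map_add, map_sum, ← real_smul, smul_mul_assoc, map_smul,
    smul_eq_mul]

lemma confExp_eq (α θ β x : ℝ) :
    confExp α (θ + β * I) x
      = cexp (((θ * x ^ α / α : ℝ) : ℂ) + ((β * x ^ α / α : ℝ) : ℂ) * I) := by
  rw [confExp]
  push_cast
  ring_nf

lemma re_confExp (α θ β x : ℝ) :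
    (confExp α (θ + β * I) x).re = Real.exp (θ * x ^ α / α) * Real.cos (β * x ^ α / α) := by
  rw [confExp_eq, exp_re]
  simp

lemma im_confExp (α θ β x : ℝ) :
    (confExp α (θ + β * I) x).im = Real.exp (θ * x ^ α / α) * Real.sin (β * x ^ α / α) := by
  rw [confExp_eq, exp_im]
  simp

open Complex in
theorem stmt_14_general (α : ℝ) (hα : α ∈ Set.Ioc (0:ℝ) 1) (n : ℕ) (p : Fin n → ℝ)
    (θ β : ℝ)
    (hroot : ((θ : ℂ) + β * Complex.I) ^ n
      + ∑ i : Fin n, (p i : ℂ) * ((θ : ℂ) + β * Complex.I) ^ (i : ℕ) = 0)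
    (t : ℝ) (ht : 0 < t) :
    ((condD α)^[n] (fun x => Real.exp (θ * x ^ α / α) * Real.cos (β * x ^ α / α)) t
      + ∑ i : Fin n, p i *
          (condD α)^[(i : ℕ)] (fun x => Real.exp (θ * x ^ α / α) * Real.cos (β * x ^ α / α)) t
      = 0) ∧
    ((condD α)^[n] (fun x => Real.exp (θ * x ^ α / α) * Real.sin (β * x ^ α / α)) t
      + ∑ i : Fin n, p i *
          (condD α)^[(i : ℕ)] (fun x => Real.exp (θ * x ^ α / α) * Real.sin (β * x ^ α / α)) t
      = 0) := by
  have key : ∀ φ : ℂ →L[ℝ] ℝ,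
      (condD α)^[n] (fun x => φ (confExp α (θ + β * I) x)) t
        + ∑ i : Fin n, p i * (condD α)^[(i : ℕ)] (fun x => φ (confExp α (θ + β * I) x)) t
        = 0 := by
    intro φ
    simp only [condD_iterate_confExp φ hα.1.ne' _ _ ht, map_pow_mul_add_sum, hroot, zero_mul,
      map_zero]
  constructor
  · simpa only [reCLM_apply, re_confExp] using key reCLM
  · simpa only [imCLM_apply, im_confExp] using key imCLM

open Complex in
theorem stmt_14 (α : ℝ) (hα : α ∈ Set.Ioc (0:ℝ) 1) (n : ℕ) (p : Fin n → ℝ)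
    (θ β : ℝ) (hβ : β ≠ 0)
    (hroot : ((θ : ℂ) + β * Complex.I) ^ n
      + ∑ i : Fin n, (p i : ℂ) * ((θ : ℂ) + β * Complex.I) ^ (i : ℕ) = 0)
    (t : ℝ) (ht : 0 < t) :
    ((condD α)^[n] (fun x => Real.exp (θ * x ^ α / α) * Real.cos (β * x ^ α / α)) t
      + ∑ i : Fin n, p i *
          (condD α)^[(i : ℕ)] (fun x => Real.exp (θ * x ^ α / α) * Real.cos (β * x ^ α / α)) t
      = 0) ∧
    ((condD α)^[n] (fun x => Real.exp (θ * x ^ α / α) * Real.sin (β * x ^ α / α)) t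
      + ∑ i : Fin n, p i *
          (condD α)^[(i : ℕ)] (fun x => Real.exp (θ * x ^ α / α) * Real.sin (β * x ^ α / α)) t
      = 0) :=
  stmt_14_general α hα n p θ β hroot t ht
end

section
/- For α ∈ (0,1] with α ≠ 3/4 and α ≠ 1/4, and t > 0, the function v(t) = exp(−4t^α)/(16α² − 16α + 3) satisfies ²T_α v + 4 T_α v + 3v = exp(−4t^α). -/
lemma deriv_exp_pow (α : ℝ) (t : ℝ) (ht : 0 < t) (c : ℝ) :
    deriv (fun x : ℝ => Real.exp (-4 * x ^ α) / c) t
      = -4 * α * t ^ (α - 1) * Real.exp (-4 * t ^ α) / c := by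
  have h : HasDerivAt (fun x : ℝ => Real.exp (-4 * x ^ α) / c)
      (Real.exp (-4 * t ^ α) * (-4 * (α * t ^ (α - 1))) / c) t := by
    exact (((Real.hasDerivAt_rpow_const (p := α) (Or.inl ht.ne')).const_mul
      (-4)).exp).div_const c
  rw [h.deriv]; ring

lemma condD_exp_pow (α : ℝ) (t : ℝ) (ht : 0 < t) (c : ℝ) :
    condD α (fun x => Real.exp (-4 * x ^ α) / c) t
      = -4 * α * (Real.exp (-4 * t ^ α) / c) := by
  unfold condD
  rw [deriv_exp_pow α t ht c]
  have : t ^ (1 - α) * t ^ (α - 1) = 1 := by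
    rw [← Real.rpow_add ht]; norm_num
  calc t ^ (1 - α) * (-4 * α * t ^ (α - 1) * Real.exp (-4 * t ^ α) / c)
      = (t ^ (1 - α) * t ^ (α - 1)) * (-4 * α * (Real.exp (-4 * t ^ α) / c)) := by ring
    _ = -4 * α * (Real.exp (-4 * t ^ α) / c) := by rw [this, one_mul]

theorem stmt_17 (α : ℝ) (hα : α ∈ Set.Ioc (0:ℝ) 1) (h1 : α ≠ 3 / 4) (h2 : α ≠ 1 / 4)
    (t : ℝ) (ht : 0 < t) :
    (condD α)^[2] (fun x => Real.exp (-4 * x ^ α) / (16 * α ^ 2 - 16 * α + 3)) t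
      + 4 * condD α (fun x => Real.exp (-4 * x ^ α) / (16 * α ^ 2 - 16 * α + 3)) t
      + 3 * (Real.exp (-4 * t ^ α) / (16 * α ^ 2 - 16 * α + 3))
      = Real.exp (-4 * t ^ α) := by
  set c : ℝ := 16 * α ^ 2 - 16 * α + 3 with hc
  have hc0 : c ≠ 0 := by
    intro h
    rcases mul_eq_zero.mp (show (4*α - 3) * (4*α - 1) = 0 by nlinarith) with h' | h'
    · exact h1 (by linarith)
    · exact h2 (by linarith)
  have key2 : (condD α)^[2] (fun x => Real.exp (-4 * x ^ α) / c) t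
      = 16 * α ^ 2 * (Real.exp (-4 * t ^ α) / c) := by
    rw [Function.iterate_succ, Function.iterate_one, Function.comp_apply]
    unfold condD
    have hev : (fun x => x ^ (1 - α) *
        deriv (fun x => Real.exp (-4 * x ^ α) / c) x)
        =ᶠ[nhds t] (fun x => -4 * α * (Real.exp (-4 * x ^ α) / c)) := by
      filter_upwards [IsOpen.mem_nhds isOpen_Ioi ht] with x hx
      have := condD_exp_pow α x hx c
      unfold condD at this
      exact this
    rw [hev.deriv_eq]
    have h : deriv (fun x => -4 * α * (Real.exp (-4 * x ^ α) / c)) t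
        = -4 * α * (-4 * α * t ^ (α - 1) * Real.exp (-4 * t ^ α) / c) := by
      rw [deriv_const_mul]
      · rw [deriv_exp_pow α t ht c]
      · exact (((Real.hasDerivAt_rpow_const (p := α) (Or.inl ht.ne')).const_mul
          (-4)).exp).differentiableAt.div_const c
    rw [h]
    have hpow : t ^ (1 - α) * t ^ (α - 1) = 1 := by
      rw [← Real.rpow_add ht]; norm_num
    calc t ^ (1 - α) * (-4 * α * (-4 * α * t ^ (α - 1) * Real.exp (-4 * t ^ α) / c))
        = (t ^ (1 - α) * t ^ (α - 1)) * (16 * α ^ 2 * (Real.exp (-4 * t ^ α) / c)) := by ring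
      _ = 16 * α ^ 2 * (Real.exp (-4 * t ^ α) / c) := by rw [hpow, one_mul]
  rw [key2, condD_exp_pow α t ht c]
  field_simp
  ring
end
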